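/- (Weber transform) Let x : ℝ³ × ℝ → ℝ³ be smooth with x(·,0) = id, and suppose ∑ₖ ẍₖ ∇ᴸ xₖ = -∇ᴸ q for a smooth function q : ℝ³ × ℝ → ℝ. Define W(a,t) = ∫₀ᵗ (q(a,s) - ½|ẋ(a,s)|²) ds. Then for all (a,t), ∑ₖ ẋₖ(a,t) ∇ᴸ xₖ(a,t) = v₀(a) - ∇ᴸ W(a,t), where v₀ = ẋ(·,0). -/

import Mathlib

open Matrix MeasureTheory intervalIntegral Asymptotics
open scoped Topology

noncomputable section

/-- Points of `ℝ³`. -/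
abbrev V3 := Fin 3 → ℝ

/-- Partial derivative in direction `i` of a scalar function on `ℝ³`. -/
noncomputable def pd (i : Fin 3) (f : V3 → ℝ) (a : V3) : ℝ :=
  fderiv ℝ f a (Pi.single i 1)

/-- Gradient of a scalar function on `ℝ³`. -/
noncomputable def grad3 (f : V3 → ℝ) (a : V3) : V3 := fun i => pd i f a

/-- Curl of a vector field on `ℝ³`. -/
noncomputable def curl3 (F : V3 → V3) (a : V3) : V3 :=
  ![pd 1 (fun b => F b 2) a - pd 2 (fun b => F b 1) a,
    pd 2 (fun b => F b 0) a - pd 0 (fun b => F b 2) a,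
    pd 0 (fun b => F b 1) a - pd 1 (fun b => F b 0) a]

/-- Divergence of a vector field on `ℝ³`. -/
noncomputable def div3 (F : V3 → V3) (a : V3) : ℝ :=
  ∑ i, pd i (fun b => F b i) a

/-- Lagrangian time derivative `ẋ(a,t)`. -/
noncomputable def tder (x : V3 × ℝ → V3) (a : V3) (t : ℝ) : V3 :=
  deriv (fun s => x (a, s)) t

/-- Second Lagrangian time derivative `ẍ(a,t)`. -/
noncomputable def tder2 (x : V3 × ℝ → V3) (a : V3) (t : ℝ) : V3 :=
  deriv (fun s => tder x a s) t

/-- Jacobian matrix `∂xᵢ/∂aⱼ` of a map `ℝ³ → ℝ³`. -/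
noncomputable def jacobian (x : V3 → V3) (a : V3) : Matrix (Fin 3) (Fin 3) ℝ :=
  Matrix.of fun i j => pd j (fun b => x b i) a

/-! Auxiliary lemmas for the Weber transform. -/

private lemma hasFDerivAt_sliceA (F : V3 × ℝ → ℝ) (hF : ContDiff ℝ (⊤ : ℕ∞) F) (a : V3) (t : ℝ) :
    HasFDerivAt (fun b => F (b, t))
      ((fderiv ℝ F (a, t)).comp ((ContinuousLinearMap.id ℝ V3).prod 0)) a := by
  have h1 : HasFDerivAt (fun b : V3 => (b, t))
      ((ContinuousLinearMap.id ℝ V3).prod 0) a :=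
    (hasFDerivAt_id a).prodMk (hasFDerivAt_const t a)
  exact ((hF.differentiable (by simp) (a, t)).hasFDerivAt).comp a h1

private lemma pd_slice (F : V3 × ℝ → ℝ) (hF : ContDiff ℝ (⊤ : ℕ∞) F) (i : Fin 3) (a : V3) (t : ℝ) :
    pd i (fun b => F (b, t)) a = fderiv ℝ F (a, t) (Pi.single i 1, 0) := by
  rw [pd, (hasFDerivAt_sliceA F hF a t).fderiv]
  rfl

private lemma hasDerivAt_sliceT (F : V3 × ℝ → ℝ) (hF : ContDiff ℝ (⊤ : ℕ∞) F) (a : V3) (t : ℝ) :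
    HasDerivAt (fun s => F (a, s)) (fderiv ℝ F (a, t) (0, 1)) t := by
  have h1 : HasDerivAt (fun s : ℝ => (a, s)) (((0 : V3), (1 : ℝ))) t :=
    (hasDerivAt_const t a).prodMk (hasDerivAt_id t)
  exact (hF.differentiable (by simp) (a, t)).hasFDerivAt.comp_hasDerivAt t h1

private lemma hasDerivAt_pi3 {Φ : ℝ → V3} {V : V3} {t : ℝ}
    (h : ∀ k, HasDerivAt (fun s => Φ s k) (V k) t) : HasDerivAt Φ V t := by
  rw [hasDerivAt_iff_hasFDerivAt]
  exact hasFDerivAt_pi.2 (fun k => (h k).hasFDerivAt)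

/-- Clairaut's theorem for smooth functions on `V3 × ℝ`. -/
private lemma fderiv_swap (F : V3 × ℝ → ℝ) (hF : ContDiff ℝ (⊤ : ℕ∞) F) (p : V3 × ℝ) (v w : V3 × ℝ) :
    fderiv ℝ (fun p' => fderiv ℝ F p' v) p w = fderiv ℝ (fun p' => fderiv ℝ F p' w) p v := by
  have hd : ∀ y, HasFDerivAt F (fderiv ℝ F y) y := fun y =>
    (hF.differentiable (by simp) y).hasFDerivAt
  have hd2 : DifferentiableAt ℝ (fderiv ℝ F) p :=
    ((hF.fderiv_right (m := (⊤ : ℕ∞)) (by simp)).differentiable (by simp)) p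
  have h2 : HasFDerivAt (fderiv ℝ F) (fderiv ℝ (fderiv ℝ F) p) p := hd2.hasFDerivAt
  have key : ∀ u w' : V3 × ℝ,
      fderiv ℝ (fun p' => fderiv ℝ F p' u) p w' = fderiv ℝ (fderiv ℝ F) p w' u := by
    intro u w'
    have := fderiv_clm_apply (c := fderiv ℝ F) (u := fun _ => u) hd2 (differentiableAt_const u)
    rw [this]
    simp
  rw [key, key]
  exact second_derivative_symmetric hd h2 w v

/-- `∂ₜ` of the `k`-th component as a smooth function on space-time. -/
private def timeD (x : V3 × ℝ → V3) (k : Fin 3) : V3 × ℝ → ℝ :=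
  fun p => fderiv ℝ (fun p' => x p' k) p (((0 : V3), (1 : ℝ)))

private lemma contDiff_timeD {x : V3 × ℝ → V3} (hx : ContDiff ℝ (⊤ : ℕ∞) x) (k : Fin 3) :
    ContDiff ℝ (⊤ : ℕ∞) (timeD x k) :=
  ((contDiff_pi.1 hx k).fderiv_right (by simp)).clm_apply contDiff_const

private lemma tder_hasDerivAt {x : V3 × ℝ → V3} (hx : ContDiff ℝ (⊤ : ℕ∞) x) (a : V3) (t : ℝ) :
    HasDerivAt (fun s => x (a, s)) (fun k => timeD x k (a, t)) t :=
  hasDerivAt_pi3 fun k => hasDerivAt_sliceT (fun p => x p k) (contDiff_pi.1 hx k) a t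

private lemma tder_eq {x : V3 × ℝ → V3} (hx : ContDiff ℝ (⊤ : ℕ∞) x) (a : V3) (t : ℝ) (k : Fin 3) :
    tder x a t k = timeD x k (a, t) := by
  rw [tder, (tder_hasDerivAt hx a t).deriv]

private lemma tder2_eq {x : V3 × ℝ → V3} (hx : ContDiff ℝ (⊤ : ℕ∞) x) (a : V3) (t : ℝ) (k : Fin 3) :
    tder2 x a t k = fderiv ℝ (timeD x k) (a, t) (0, 1) := by
  have h1 : (fun s => tder x a s) = fun s => (fun k => timeD x k (a, s)) := by
    funext s
    exact funext fun k => tder_eq hx a s k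
  have h2 : HasDerivAt (fun s => (fun k => timeD x k (a, s)))
      (fun k => fderiv ℝ (timeD x k) (a, t) (0, 1)) t :=
    hasDerivAt_pi3 fun k => hasDerivAt_sliceT (timeD x k) (contDiff_timeD hx k) a t
  rw [tder2, h1, h2.deriv]

/-- Equality of mixed partials, in the form we need. -/
private lemma mixed {x : V3 × ℝ → V3} (hx : ContDiff ℝ (⊤ : ℕ∞) x) (i : Fin 3) (a : V3) (t : ℝ)
    (k : Fin 3) :
    HasDerivAt (fun s => pd i (fun b => x (b, s) k) a)
      (pd i (fun b => timeD x k (b, t)) a) t := by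
  have hfk := contDiff_pi.1 hx k
  have h1 : (fun s => pd i (fun b => x (b, s) k) a)
      = fun s => (fun p => fderiv ℝ (fun p' => x p' k) p ((Pi.single i 1 : V3), (0 : ℝ))) (a, s) := by
    funext s
    exact pd_slice _ hfk i a s
  have hGc : ContDiff ℝ (⊤ : ℕ∞) (fun p => fderiv ℝ (fun p' => x p' k) p ((Pi.single i 1 : V3), (0 : ℝ))) :=
    (hfk.fderiv_right (by simp)).clm_apply contDiff_const
  have h2 := hasDerivAt_sliceT _ hGc a t
  rw [h1]
  convert h2 using 1
  rw [pd_slice _ (contDiff_timeD hx k) i a t]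
  exact fderiv_swap _ hfk (a, t) ((0 : V3), (1 : ℝ)) ((Pi.single i 1 : V3), (0 : ℝ))

/-- Weber transform: if `∑ₖ ẍₖ ∇ᴸxₖ = -∇ᴸq` and
`W(a,t) = ∫₀ᵗ (q(a,s) - ½|ẋ(a,s)|²) ds`, then `∑ₖ ẋₖ ∇ᴸxₖ = v₀ - ∇ᴸW`. -/
theorem weber_transform
    (x : V3 × ℝ → V3) (q W : V3 × ℝ → ℝ)
    (hx : ContDiff ℝ (⊤ : ℕ∞) x) (hq : ContDiff ℝ (⊤ : ℕ∞) q)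
    (hx0 : ∀ a, x (a, 0) = a)
    (hmom : ∀ (a : V3) (t : ℝ),
      (∑ k : Fin 3, tder2 x a t k • grad3 (fun b => x (b, t) k) a)
        = -grad3 (fun b => q (b, t)) a)
    (hWdef : ∀ (a : V3) (t : ℝ),
      W (a, t) = ∫ s in (0:ℝ)..t, (q (a, s) - (1/2) * ∑ k : Fin 3, (tder x a s k) ^ 2)) :
    ∀ (a : V3) (t : ℝ),
      (∑ k : Fin 3, tder x a t k • grad3 (fun b => x (b, t) k) a)
        = tder x a 0 - grad3 (fun b => W (b, t)) a := by
  intro a t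
  funext i
  have hΦ : ∀ k, ContDiff ℝ (⊤ : ℕ∞) (timeD x k) := fun k => contDiff_timeD hx k
  set G : V3 × ℝ → ℝ := fun p => q p - (1/2) * ∑ k : Fin 3, (timeD x k p) ^ 2 with hGdef
  have hG : ContDiff ℝ (⊤ : ℕ∞) G :=
    hq.sub (contDiff_const.mul (ContDiff.sum fun k _ => (hΦ k).pow 2))
  set φ : ℝ → ℝ := fun s => ∑ k : Fin 3, tder x a s k * pd i (fun b => x (b, s) k) a with hφdef
  -- the momentum equation, componentwise
  have hmom' : ∀ s : ℝ,
      ∑ k : Fin 3, tder2 x a s k * pd i (fun b => x (b, s) k) a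
        = -(pd i (fun b => q (b, s)) a) := by
    intro s
    have := congrFun (hmom a s) i
    simpa [grad3, Finset.sum_apply, Pi.smul_apply, smul_eq_mul, Pi.neg_apply] using this
  -- the gradient of the slice of G
  have hpdG : ∀ s : ℝ, pd i (fun b => G (b, s)) a
      = pd i (fun b => q (b, s)) a
        - ∑ k : Fin 3, timeD x k (a, s) * pd i (fun b => timeD x k (b, s)) a := by
    intro s
    have hq' := hasFDerivAt_sliceA q hq a s
    have hk : ∀ k, HasFDerivAt (fun b => timeD x k (b, s))
        ((fderiv ℝ (timeD x k) (a, s)).comp ((ContinuousLinearMap.id ℝ V3).prod 0)) a :=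
      fun k => hasFDerivAt_sliceA (timeD x k) (hΦ k) a s
    have hsq : ∀ k : Fin 3, HasFDerivAt (fun b => (timeD x k (b, s)) ^ 2)
        (timeD x k (a, s) •
            ((fderiv ℝ (timeD x k) (a, s)).comp ((ContinuousLinearMap.id ℝ V3).prod 0))
          + timeD x k (a, s) •
            ((fderiv ℝ (timeD x k) (a, s)).comp ((ContinuousLinearMap.id ℝ V3).prod 0))) a := by
      intro k
      have := (hk k).mul (hk k)
      have h2 : (fun b => (timeD x k (b, s)) ^ 2) = fun b => timeD x k (b, s) * timeD x k (b, s) := by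
        funext b; ring
      rw [h2]
      exact this
    have hGd : HasFDerivAt (fun b => G (b, s))
        (((fderiv ℝ q (a, s)).comp ((ContinuousLinearMap.id ℝ V3).prod 0))
          - (1/2 : ℝ) • ∑ k : Fin 3,
            (timeD x k (a, s) •
              ((fderiv ℝ (timeD x k) (a, s)).comp ((ContinuousLinearMap.id ℝ V3).prod 0))
            + timeD x k (a, s) •
              ((fderiv ℝ (timeD x k) (a, s)).comp ((ContinuousLinearMap.id ℝ V3).prod 0)))) a := by
      exact hq'.sub ((HasFDerivAt.fun_sum (fun k _ => hsq k)).const_mul (1/2 : ℝ))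
    rw [pd, hGd.fderiv]
    simp only [ContinuousLinearMap.coe_sub', Pi.sub_apply, ContinuousLinearMap.coe_smul',
      Pi.smul_apply, ContinuousLinearMap.coe_sum', Finset.sum_apply,
      ContinuousLinearMap.add_apply, ContinuousLinearMap.coe_comp', Function.comp_apply,
      smul_eq_mul]
    have hrw : ∀ k : Fin 3,
        (fderiv ℝ (timeD x k) (a, s)) (((ContinuousLinearMap.id ℝ V3).prod 0) (Pi.single i 1))
          = pd i (fun b => timeD x k (b, s)) a := by
      intro k
      rw [pd_slice (timeD x k) (hΦ k) i a s]
      rfl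
    have hrwq : (fderiv ℝ q (a, s)) (((ContinuousLinearMap.id ℝ V3).prod 0) (Pi.single i 1))
        = pd i (fun b => q (b, s)) a := by
      rw [pd_slice q hq i a s]
      rfl
    simp only [hrw, hrwq]
    rw [Finset.mul_sum]
    ring_nf
  -- derivative of φ
  have hφ' : ∀ s : ℝ, HasDerivAt φ (-(pd i (fun b => G (b, s)) a)) s := by
    intro s
    have hterm : ∀ k : Fin 3,
        HasDerivAt (fun s' => tder x a s' k * pd i (fun b => x (b, s') k) a)
          (tder2 x a s k * pd i (fun b => x (b, s) k) a
            + tder x a s k * pd i (fun b => timeD x k (b, s)) a) s := by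
      intro k
      have h1 : HasDerivAt (fun s' => tder x a s' k) (tder2 x a s k) s := by
        have he : (fun s' => tder x a s' k) = fun s' => timeD x k (a, s') :=
          funext fun s' => tder_eq hx a s' k
        rw [he, tder2_eq hx a s k]
        exact hasDerivAt_sliceT (timeD x k) (hΦ k) a s
      exact h1.mul (mixed hx i a s k)
    have hsum := HasDerivAt.fun_sum (u := Finset.univ) (fun k _ => hterm k)
    refine hsum.congr_deriv ?_
    rw [hpdG s, Finset.sum_add_distrib, hmom' s]
    have : ∀ k : Fin 3, tder x a s k = timeD x k (a, s) := fun k => tder_eq hx a s k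
    simp only [this]
    ring
  -- continuity of the integrand
  have hcont : Continuous fun s => pd i (fun b => G (b, s)) a := by
    have he : (fun s => pd i (fun b => G (b, s)) a)
        = fun s => (fderiv ℝ G (a, s)) ((Pi.single i 1 : V3), (0 : ℝ)) :=
      funext fun s => pd_slice G hG i a s
    rw [he]
    exact (((hG.fderiv_right (m := (⊤ : ℕ∞)) (by simp)).continuous.comp
      (continuous_const.prodMk continuous_id)).clm_apply continuous_const)
  -- FTC
  have hFTC : ∫ s in (0:ℝ)..t, -(pd i (fun b => G (b, s)) a) = φ t - φ 0 :=
    intervalIntegral.integral_eq_sub_of_hasDerivAt (fun s _ => hφ' s)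
      (hcont.neg.intervalIntegrable 0 t)
  -- derivative of W in a
  set J : V3 →L[ℝ] V3 × ℝ := (ContinuousLinearMap.id ℝ V3).prod 0 with hJ
  have hF'cont : Continuous fun p : V3 × ℝ => (fderiv ℝ G p).comp J :=
    (hG.fderiv_right (m := (⊤ : ℕ∞)) (by simp)).continuous.clm_comp continuous_const
  have hW : HasFDerivAt (fun b => W (b, t))
      (∫ s in (0:ℝ)..t, (fderiv ℝ G (a, s)).comp J) a := by
    have hrw : (fun b => W (b, t)) = fun b => ∫ s in (0:ℝ)..t, G (b, s) := by
      funext b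
      rw [hWdef b t]
      apply intervalIntegral.integral_congr
      intro s _
      simp only [hGdef]
      congr 1
      exact congrArg _ (Finset.sum_congr rfl fun k _ => by rw [tder_eq hx b s k])
    rw [hrw]
    obtain ⟨C, hC⟩ := ((isCompact_closedBall a 1).prod (isCompact_uIcc (a := (0:ℝ)) (b := t))).exists_bound_of_continuousOn
      hF'cont.continuousOn
    apply intervalIntegral.hasFDerivAt_integral_of_dominated_of_fderiv_le
      (F' := fun b s => (fderiv ℝ G (b, s)).comp J) (bound := fun _ => C) (Metric.ball_mem_nhds a zero_lt_one)
    · exact Filter.Eventually.of_forall fun b =>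
        ((hG.continuous.comp (continuous_const.prodMk continuous_id)).aestronglyMeasurable)
    · exact (hG.continuous.comp (continuous_const.prodMk continuous_id)).intervalIntegrable 0 t
    · exact (hF'cont.comp (continuous_const.prodMk continuous_id)).aestronglyMeasurable
    · refine Filter.Eventually.of_forall fun s hs b hb => ?_
      exact hC (b, s) ⟨Metric.ball_subset_closedBall hb, Set.uIoc_subset_uIcc hs⟩
    · exact intervalIntegrable_const
    · refine Filter.Eventually.of_forall fun s hs b hb => ?_
      exact hasFDerivAt_sliceA G hG b s
  have hint : IntervalIntegrable (fun s => (fderiv ℝ G (a, s)).comp J) volume 0 t :=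
    ((hF'cont.comp (continuous_const.prodMk continuous_id))).intervalIntegrable 0 t
  have hpdW : pd i (fun b => W (b, t)) a = ∫ s in (0:ℝ)..t, pd i (fun b => G (b, s)) a := by
    rw [pd, hW.fderiv, ContinuousLinearMap.intervalIntegral_apply hint (Pi.single i 1)]
    apply intervalIntegral.integral_congr
    intro s _
    exact (pd_slice G hG i a s).symm
  -- value at time 0
  have hφ0 : φ 0 = tder x a 0 i := by
    have hcoord : ∀ k : Fin 3, pd i (fun b => x (b, 0) k) a = (Pi.single i 1 : V3) k := by
      intro k
      have he : (fun b => x (b, 0) k) = fun b : V3 => b k := funext fun b => by rw [hx0 b]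
      rw [pd, he,
        show (fun b : V3 => b k) = ⇑(ContinuousLinearMap.proj (R := ℝ) (φ := fun _ : Fin 3 => ℝ) k)
          from rfl,
        ContinuousLinearMap.fderiv]
      rfl
    simp only [hφdef, hcoord]
    simp [Pi.single_apply]
  -- assemble
  have hgoal : φ t = tder x a 0 i - pd i (fun b => W (b, t)) a := by
    rw [intervalIntegral.integral_neg] at hFTC
    rw [hpdW, ← hφ0]
    linarith
  simpa [grad3, Finset.sum_apply, Pi.smul_apply, smul_eq_mul, Pi.sub_apply, hφdef] using hgoal
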